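/- arXiv:0902.1042 — 2 statements merged into one kernel-verified Lean document; each statement's English description precedes it below -/
import Mathlib

section
/- There exists a language of infinite words (namely L_sep) that is recognized by a nondeterministic max-automaton but is not recognized by any deterministic max-automaton; hence nondeterministic max-automata recognize strictly more languages than deterministic ones. -/
namespace MaxReg

/-! ### Counter operations and boolean combinations -/

inductive CounterOp (C : Type) where
  | inc (c : C)
  | reset (c : C)
  | output (c : C)
  | maxOp (c d : C)

def applyOp {C : Type} [DecidableEq C] (v : C → ℕ) :
    CounterOp C → (C → ℕ) × Option (C × ℕ)
  | .inc c => (Function.update v c (v c + 1), none)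
  | .reset c => (Function.update v c 0, none)
  | .output c => (v, some (c, v c))
  | .maxOp c d => (Function.update v c (max (v c) (v d)), none)

def applyOps {C : Type} [DecidableEq C] :
    List (CounterOp C) → (C → ℕ) → (C → ℕ) × List (C × ℕ)
  | [], v => (v, [])
  | op :: ops, v =>
      let p := applyOp v op
      let r := applyOps ops p.1
      (r.1, p.2.toList ++ r.2)

/-- Boolean combinations with atoms in `σ` (used for acceptance conditions:
the atom `c` stands for "the sequence of values output on counter `c` is bounded"). -/
inductive BC (σ : Type) where
  | tt
  | atom (a : σ)
  | nt (φ : BC σ)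
  | an (φ ψ : BC σ)

def BC.eval {σ : Type} (f : σ → Prop) : BC σ → Prop
  | .tt => True
  | .atom a => f a
  | .nt φ => ¬ φ.eval f
  | .an φ ψ => φ.eval f ∧ ψ.eval f

/-! ### Deterministic max-automata -/

structure MaxAutomaton (α : Type) where
  Q : Type
  C : Type
  [finQ : Fintype Q]
  [finC : Fintype C]
  [decC : DecidableEq C]
  init : Q
  δ : Q → α → Q × List (CounterOp C)
  acc : BC C

attribute [instance] MaxAutomaton.finQ MaxAutomaton.finC MaxAutomaton.decC

namespace MaxAutomaton

variable {α : Type} (A : MaxAutomaton α)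

/-- The state at position `n` of the unique run on `w`, started in state `q`
(at position `0`). -/
def runFrom (q : A.Q) (w : ℕ → α) : ℕ → A.Q
  | 0 => q
  | n + 1 => (A.δ (runFrom q w n) (w n)).1

/-- Counter values before reading the letter at position `n` (all counters start at `0`). -/
def valsFrom (q : A.Q) (w : ℕ → α) : ℕ → (A.C → ℕ)
  | 0 => fun _ => 0
  | n + 1 => (applyOps (A.δ (A.runFrom q w n) (w n)).2 (valsFrom q w n)).1

/-- The (counter, value) pairs output while reading the letter at position `n`. -/
def outsFrom (q : A.Q) (w : ℕ → α) (n : ℕ) : List (A.C × ℕ) :=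
  (applyOps (A.δ (A.runFrom q w n) (w n)).2 (A.valsFrom q w n)).2

/-- "The sequence `ρ_c` of values output on counter `c` is bounded." -/
def BoundedFrom (q : A.Q) (w : ℕ → α) (c : A.C) : Prop :=
  ∃ B, ∀ n, ∀ p ∈ A.outsFrom q w n, p.1 = c → p.2 ≤ B

def AcceptsFrom (q : A.Q) (w : ℕ → α) : Prop :=
  A.acc.eval (A.BoundedFrom q w)

def Accepts (w : ℕ → α) : Prop := A.AcceptsFrom A.init w

def Lang : Set (ℕ → α) := { w | A.Accepts w }

/-- One step on a configuration (state, counter valuation), for reading finite words. -/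
def stepList (p : A.Q × (A.C → ℕ)) (a : α) : A.Q × (A.C → ℕ) :=
  ((A.δ p.1 a).1, (applyOps (A.δ p.1 a).2 p.2).1)

/-- Configuration (state, counter valuation) reached after reading a finite word
from the initial state with all counters `0`. -/
def readConfig (l : List α) : A.Q × (A.C → ℕ) :=
  l.foldl A.stepList (A.init, fun _ => 0)

end MaxAutomaton

/-! ### Annotating words with sets -/

/-- `w[X]` : extend each letter of `w` with the bit `1` exactly at the positions in `X`. -/
def withSet {α : Type} (w : ℕ → α) (X : Finset ℕ) : ℕ → α × Bool :=
  fun n => (w n, decide (n ∈ X))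

/-- `w[X₁,…,Xₙ]` : extend each letter of `w` with a bit vector. -/
def withSets {α : Type} {n : ℕ} (w : ℕ → α) (Xs : Fin n → Finset ℕ) :
    ℕ → α × (Fin n → Bool) :=
  fun m => (w m, fun i => decide (m ∈ Xs i))

/-- Annotate a finite word with a set of positions. -/
def encodeList {α : Type} (l : List α) (X : Finset ℕ) : List (α × Bool) :=
  l.zipIdx.map (fun p => (p.1, decide (p.2 ∈ X)))

/-- `UL` : the words `w` such that `w[X] ∈ L` for arbitrarily large finite sets `X`. -/
def UL {α : Type} (L : Set (ℕ → α × Bool)) : Set (ℕ → α) :=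
  { w | ∀ n : ℕ, ∃ X : Finset ℕ, n ≤ X.card ∧ withSet w X ∈ L }

/-- `max(q, l)` : maximal cardinality of a set `X` of positions of `l` such that `A`
reaches state `q` after reading `l[X]` (and `0` if there is no such set). -/
noncomputable def maxReach {α : Type} (A : MaxAutomaton (α × Bool)) (q : A.Q)
    (l : List α) : ℕ :=
  sSup { k | ∃ X : Finset ℕ, (∀ x ∈ X, x < l.length) ∧ X.card = k ∧
    (A.readConfig (encodeList l X)).1 = q }

def suffixFrom {α : Type} (w : ℕ → α) (n : ℕ) : ℕ → α := fun k => w (n + k)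

def prefixList {α : Type} (w : ℕ → α) (n : ℕ) : List α := (List.range n).map w

/-! ### WMSO+U and MSO+U formulas -/

inductive Formula (α : Type) where
  | letter (a : α) (x : ℕ)
  | mem (x X : ℕ)
  | le (x y : ℕ)
  | not (φ : Formula α)
  | and (φ ψ : Formula α)
  | exFO (x : ℕ) (φ : Formula α)
  | exSO (X : ℕ) (φ : Formula α)
  | U (X : ℕ) (φ : Formula α)

/-- Weak semantics: set variables range over finite sets of positions. -/
def Sat {α : Type} (w : ℕ → α) (v1 : ℕ → ℕ) (v2 : ℕ → Finset ℕ) :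
    Formula α → Prop
  | .letter a x => w (v1 x) = a
  | .mem x X => v1 x ∈ v2 X
  | .le x y => v1 x ≤ v1 y
  | .not φ => ¬ Sat w v1 v2 φ
  | .and φ ψ => Sat w v1 v2 φ ∧ Sat w v1 v2 ψ
  | .exFO x φ => ∃ k : ℕ, Sat w (Function.update v1 x k) v2 φ
  | .exSO X φ => ∃ S : Finset ℕ, Sat w v1 (Function.update v2 X S) φ
  | .U X φ => ∀ n : ℕ, ∃ S : Finset ℕ, n ≤ S.card ∧
      Sat w v1 (Function.update v2 X S) φ

/-- Full semantics: set variables range over arbitrary subsets of ℕ; the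
unbounding quantifier still speaks about finite sets. -/
def SatFull {α : Type} (w : ℕ → α) (v1 : ℕ → ℕ) (v2 : ℕ → Set ℕ) :
    Formula α → Prop
  | .letter a x => w (v1 x) = a
  | .mem x X => v1 x ∈ v2 X
  | .le x y => v1 x ≤ v1 y
  | .not φ => ¬ SatFull w v1 v2 φ
  | .and φ ψ => SatFull w v1 v2 φ ∧ SatFull w v1 v2 ψ
  | .exFO x φ => ∃ k : ℕ, SatFull w (Function.update v1 x k) v2 φ
  | .exSO X φ => ∃ S : Set ℕ, SatFull w v1 (Function.update v2 X S) φ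
  | .U X φ => ∀ n : ℕ, ∃ S : Finset ℕ, n ≤ S.card ∧
      SatFull w v1 (Function.update v2 X (↑S : Set ℕ)) φ

def freeFO {α : Type} : Formula α → Finset ℕ
  | .letter _ x => {x}
  | .mem x _ => {x}
  | .le x y => {x, y}
  | .not φ => freeFO φ
  | .and φ ψ => freeFO φ ∪ freeFO ψ
  | .exFO x φ => freeFO φ \ {x}
  | .exSO _ φ => freeFO φ
  | .U _ φ => freeFO φ

def freeSO {α : Type} : Formula α → Finset ℕ
  | .letter _ _ => ∅
  | .mem _ X => {X}
  | .le _ _ => ∅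
  | .not φ => freeSO φ
  | .and φ ψ => freeSO φ ∪ freeSO ψ
  | .exFO _ φ => freeSO φ
  | .exSO X φ => freeSO φ \ {X}
  | .U X φ => freeSO φ \ {X}

def Sentence {α : Type} (φ : Formula α) : Prop :=
  freeFO φ = ∅ ∧ freeSO φ = ∅

/-- `L` is definable by a sentence of WMSO+U. -/
def DefinableW {α : Type} (L : Set (ℕ → α)) : Prop :=
  ∃ φ : Formula α, Sentence φ ∧
    L = { w | Sat w (fun _ => 0) (fun _ => (∅ : Finset ℕ)) φ }

/-- `L` is definable by a sentence of full MSO+U. -/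
def DefinableF {α : Type} (L : Set (ℕ → α)) : Prop :=
  ∃ φ : Formula α, Sentence φ ∧
    L = { w | SatFull w (fun _ => 0) (fun _ => (∅ : Set ℕ)) φ }

/-- `φ` contains no occurrence of the unbounding quantifier. -/
def UFree {α : Type} : Formula α → Prop
  | .letter _ _ => True
  | .mem _ _ => True
  | .le _ _ => True
  | .not φ => UFree φ
  | .and φ ψ => UFree φ ∧ UFree ψ
  | .exFO _ φ => UFree φ
  | .exSO _ φ => UFree φ
  | .U _ _ => False

/-- Boolean combinations of formulas `U X. φ` with `φ` free of the unbounding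
quantifier. -/
inductive IsUNormal {α : Type} : Formula α → Prop
  | base (X : ℕ) (φ : Formula α) : UFree φ → IsUNormal (.U X φ)
  | not {φ : Formula α} : IsUNormal φ → IsUNormal (.not φ)
  | and {φ ψ : Formula α} : IsUNormal φ → IsUNormal ψ →
      IsUNormal (.and φ ψ)

/-! ### Deterministic Muller automata -/

structure MullerAutomaton (α : Type) where
  Q : Type
  [finQ : Fintype Q]
  init : Q
  δ : Q → α → Q
  F : Set (Set Q)

attribute [instance] MullerAutomaton.finQ

namespace MullerAutomaton

variable {α : Type} (M : MullerAutomaton α)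

def run (w : ℕ → α) : ℕ → M.Q
  | 0 => M.init
  | n + 1 => M.δ (run w n) (w n)

/-- States occurring infinitely often in the run on `w`. -/
def InfOcc (w : ℕ → α) : Set M.Q :=
  { q | ∀ n : ℕ, ∃ m, n ≤ m ∧ M.run w m = q }

def Lang : Set (ℕ → α) := { w | M.InfOcc w ∈ M.F }

end MullerAutomaton

/-! ### Partial runs, convergence, spanning sets -/

section PartialRuns

variable {Q α : Type}

/-- State at position `n + k` of the run seeded at configuration `(q, n)`. -/
def runSeed (δ : Q → α → Q) (w : ℕ → α) (q : Q) (n : ℕ) : ℕ → Q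
  | 0 => q
  | k + 1 => δ (runSeed δ w q n k) (w (n + k))

/-- The partial run seeded at configuration `(q, n)`. -/
def seeded (δ : Q → α → Q) (w : ℕ → α) (q : Q) (n : ℕ) : ℕ → Option Q :=
  fun m => if _h : n ≤ m then some (runSeed δ w q n (m - n)) else none

/-- A partial run over `w`: either the nowhere-defined run or a seeded run. -/
def IsPartialRun (δ : Q → α → Q) (w : ℕ → α) (ρ : ℕ → Option Q) : Prop :=
  ρ = (fun _ => none) ∨ ∃ q n, ρ = seeded δ w q n

/-- Two partial runs converge if they agree from some position on. -/
def Converge (ρ₁ ρ₂ : ℕ → Option Q) : Prop :=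
  ∃ N : ℕ, ∀ m, N ≤ m → ρ₁ m = ρ₂ m

/-- A set of partial runs spans `w` if every partial run over `w` converges with
some member of the set. -/
def Spans (δ : Q → α → Q) (w : ℕ → α) (S : Set (ℕ → Option Q)) : Prop :=
  ∀ ρ, IsPartialRun δ w ρ → ∃ ρ' ∈ S, Converge ρ ρ'

end PartialRuns

/-! ### Deterministic letter-to-letter transducers -/

structure Transducer (α β : Type) where
  Q : Type
  [finQ : Fintype Q]
  init : Q
  δ : Q → α → Q
  out : Q → α → β

attribute [instance] Transducer.finQ

namespace Transducer

variable {α β : Type} (T : Transducer α β)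

def run (w : ℕ → α) : ℕ → T.Q
  | 0 => T.init
  | n + 1 => T.δ (run w n) (w n)

/-- The function `Σ^ω → Γ^ω` computed by the transducer. -/
def f (w : ℕ → α) : ℕ → β := fun n => T.out (T.run w n) (w n)

end Transducer

open Classical in
/-- Decode a word over `Q × {0,1}` as a partial run: position `m` is defined (with the
state recorded at `m`) iff all markers from position `m` on are `1`. -/
noncomputable def decode {Q : Type} (u : ℕ → Q × Bool) : ℕ → Option Q :=
  fun m => if (∀ j, m ≤ j → (u j).2 = true) then some (u m).1 else none

/-! ### Guarded max-automata -/

inductive GOp (C α : Type) where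
  | inc (c : C)
  | reset (c : C)
  | output (c : C)
  | maxOp (c d : C)
  /-- `if G then output c` : output the value of `c` only if the suffix of the input
  beginning at the next position belongs to `G`. -/
  | goutput (G : Set (ℕ → α)) (c : C)

open Classical in
noncomputable def applyGOp {C α : Type} [DecidableEq C] (suffix : ℕ → α)
    (v : C → ℕ) : GOp C α → (C → ℕ) × Option (C × ℕ)
  | .inc c => (Function.update v c (v c + 1), none)
  | .reset c => (Function.update v c 0, none)
  | .output c => (v, some (c, v c))
  | .maxOp c d => (Function.update v c (max (v c) (v d)), none)
  | .goutput G c => (v, if suffix ∈ G then some (c, v c) else none)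

noncomputable def applyGOps {C α : Type} [DecidableEq C] (suffix : ℕ → α) :
    List (GOp C α) → (C → ℕ) → (C → ℕ) × List (C × ℕ)
  | [], v => (v, [])
  | op :: ops, v =>
      let p := applyGOp suffix v op
      let r := applyGOps suffix ops p.1
      (r.1, p.2.toList ++ r.2)

def GOp.WF {C α : Type} : GOp C α → Prop
  | .goutput G _ => ∃ A : MaxAutomaton α, A.Lang = G
  | _ => True

structure GuardedMaxAutomaton (α : Type) where
  Q : Type
  C : Type
  [finQ : Fintype Q]
  [finC : Fintype C]
  [decC : DecidableEq C]
  init : Q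
  δ : Q → α → Q × List (GOp C α)
  acc : BC C

attribute [instance] GuardedMaxAutomaton.finQ GuardedMaxAutomaton.finC
  GuardedMaxAutomaton.decC

namespace GuardedMaxAutomaton

variable {α : Type} (B : GuardedMaxAutomaton α)

/-- All guards used by the automaton are languages recognized by deterministic
max-automata. -/
def WF : Prop := ∀ q a, ∀ op ∈ (B.δ q a).2, op.WF

def run (w : ℕ → α) : ℕ → B.Q
  | 0 => B.init
  | n + 1 => (B.δ (run w n) (w n)).1

noncomputable def vals (w : ℕ → α) : ℕ → (B.C → ℕ)
  | 0 => fun _ => 0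
  | n + 1 =>
      (applyGOps (suffixFrom w (n + 1)) (B.δ (B.run w n) (w n)).2 (vals w n)).1

noncomputable def outs (w : ℕ → α) (n : ℕ) : List (B.C × ℕ) :=
  (applyGOps (suffixFrom w (n + 1)) (B.δ (B.run w n) (w n)).2 (B.vals w n)).2

def Bounded (w : ℕ → α) (c : B.C) : Prop :=
  ∃ Bd, ∀ n, ∀ p ∈ B.outs w n, p.1 = c → p.2 ≤ Bd

def Accepts (w : ℕ → α) : Prop := B.acc.eval (B.Bounded w)

def Lang : Set (ℕ → α) := { w | B.Accepts w }

end GuardedMaxAutomaton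

/-! ### Nondeterministic max-automata -/

structure NMaxAutomaton (α : Type) where
  Q : Type
  C : Type
  [finQ : Fintype Q]
  [finC : Fintype C]
  [decC : DecidableEq C]
  init : Q
  δ : Q → α → Set (Q × List (CounterOp C))
  acc : BC C

attribute [instance] NMaxAutomaton.finQ NMaxAutomaton.finC NMaxAutomaton.decC

/-- Counter values along a sequence of counter-operation lists. -/
def nvals {C : Type} [DecidableEq C] (ops : ℕ → List (CounterOp C)) :
    ℕ → (C → ℕ)
  | 0 => fun _ => 0
  | n + 1 => (applyOps (ops n) (nvals ops n)).1

def nouts {C : Type} [DecidableEq C] (ops : ℕ → List (CounterOp C)) (n : ℕ) :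
    List (C × ℕ) :=
  (applyOps (ops n) (nvals ops n)).2

namespace NMaxAutomaton

variable {α : Type} (A : NMaxAutomaton α)

def Accepts (w : ℕ → α) : Prop :=
  ∃ (q : ℕ → A.Q) (ops : ℕ → List (CounterOp A.C)),
    q 0 = A.init ∧
    (∀ n, (q (n + 1), ops n) ∈ A.δ (q n) (w n)) ∧
    A.acc.eval (fun c => ∃ B, ∀ n, ∀ p ∈ nouts ops n, p.1 = c → p.2 ≤ B)

def Lang : Set (ℕ → α) := { w | A.Accepts w }

end NMaxAutomaton

/-! ### The separating language -/

/-- Position of the `k`-th letter `b` in `a^{ns 0} b a^{ns 1} b ⋯` (0-indexed). -/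
def bpos (ns : ℕ → ℕ) (k : ℕ) : ℕ := (∑ i ∈ Finset.range (k + 1), ns i) + k

/-- `L_sep` over the alphabet `{a, b}` (with `a = false`, `b = true`): words
`a^{n₁} b a^{n₂} b ⋯` such that some number appears infinitely often in `n₁, n₂, …`. -/
def Lsep : Set (ℕ → Bool) :=
  { w | ∃ ns : ℕ → ℕ,
      (∀ m, w m = true ↔ ∃ k, bpos ns k = m) ∧
      ∃ v, { i | ns i = v }.Infinite }

/-! ### Topological notions -/

/-- A `Σ₂` set: a countable union of closed sets. -/
def IsSigma2 {X : Type} [TopologicalSpace X] (S : Set X) : Prop :=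
  ∃ F : ℕ → Set X, (∀ n, IsClosed (F n)) ∧ S = ⋃ n, F n

/-- Boolean combinations of `Σ₂` sets. -/
inductive IsBoolCombSigma2 {X : Type} [TopologicalSpace X] : Set X → Prop
  | base {S : Set X} : IsSigma2 S → IsBoolCombSigma2 S
  | compl {S : Set X} : IsBoolCombSigma2 S → IsBoolCombSigma2 Sᶜ
  | inter {S T : Set X} : IsBoolCombSigma2 S → IsBoolCombSigma2 T →
      IsBoolCombSigma2 (S ∩ T)


/-!
A nondeterministic automaton can guess infinitely many `a`-blocks of one common length.

Against a deterministic automaton, code `ns : ℕ → ℕ` by the word `a^{ns 0} b a^{ns 1} b ⋯`. Each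
output of the run depends on a finite prefix of `ns`, so "counter `c` is bounded" is a countable
union of closed sets of Baire space, and acceptance is a boolean combination of finitely many such
`Σ₂` sets. No such combination is the set of sequences repeating some value infinitely often. Work
with regions: a cylinder together with a lower bound on all later values. First shrink to a region
on which, for every `Σ₂` set, either the region lies in one of its closed pieces or no subregion
does. Then a fusion construction inside the region
avoids all closed pieces of the undecided sets while appending, at stage `j`, either the value
`bound + j` or the value `bound` itself; the first limit tends to infinity, the second repeats
`bound` infinitely often, and the two agree on every `Σ₂` set.
-/

theorem BC.eval_congr {σ : Type} {p q : σ → Prop} (h : ∀ a, p a ↔ q a) :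
    ∀ φ : BC σ, φ.eval p ↔ φ.eval q
  | .tt => Iff.rfl
  | .atom a => h a
  | .nt φ => not_congr (BC.eval_congr h φ)
  | .an φ ψ => and_congr (BC.eval_congr h φ) (BC.eval_congr h ψ)

theorem exists_le_forall_or_forall_le_not {α ι : Type*} [Preorder α] [Finite ι]
    (P : ι → α → Prop) (hP : ∀ i ⦃a b⦄, b ≤ a → P i a → P i b) (a : α) :
    ∃ b ≤ a, ∀ i, P i b ∨ ∀ c ≤ b, ¬ P i c := by
  classical
  cases nonempty_fintype ι
  suffices ∀ s : Finset ι, ∃ b ≤ a, ∀ i ∈ s, P i b ∨ ∀ c ≤ b, ¬ P i c by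
    simpa using this Finset.univ
  intro s
  induction s using Finset.induction_on with
  | empty => exact ⟨a, le_rfl, by simp⟩
  | insert i s _ ih =>
    obtain ⟨b, hba, hb⟩ := ih
    by_cases hi : ∃ c ≤ b, P i c
    · obtain ⟨c, hcb, hc⟩ := hi
      refine ⟨c, hcb.trans hba, (Finset.forall_mem_insert _ _ _).2 ⟨Or.inl hc, fun j hj => ?_⟩⟩
      exact (hb j hj).imp (hP j hcb) fun h d hdc => h d (hdc.trans hcb)
    · simp only [not_exists, not_and] at hi
      exact ⟨b, hba, (Finset.forall_mem_insert _ _ _).2 ⟨Or.inr hi, hb⟩⟩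

section BaireSpace

open Filter
open PiNat (cylinder)

variable {E : Type*} [TopologicalSpace E]

theorem isClosed_setOf_of_agree [DiscreteTopology E] {p : (ℕ → E) → Prop} (n : ℕ)
    (h : ∀ f g, (∀ i < n, f i = g i) → p f → p g) : IsClosed {f | p f} := by
  refine isOpen_compl_iff.1 (isOpen_iff_forall_mem_open.2 fun f hf => ?_)
  exact ⟨cylinder f n, fun g hg hpg => hf (h g f hg hpg), PiNat.isOpen_cylinder _ f n,
    PiNat.self_mem_cylinder f n⟩

theorem nonempty_iInter_of_antitone {A : ℕ → Set (ℕ → E)} (hA : Antitone A)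
    (hclosed : ∀ j, IsClosed (A j)) (hne : ∀ j, (A j).Nonempty)
    (hagree : ∀ j, ∀ f ∈ A j, ∀ g ∈ A j, ∀ i < j, f i = g i) : (⋂ j, A j).Nonempty := by
  choose h hh using hne
  have hlim : ∀ i k, i < k → h k i = h (i + 1) i := fun i k hik =>
    hagree (i + 1) _ (hA hik (hh k)) _ (hh (i + 1)) i (Nat.lt_succ_self i)
  refine ⟨fun i => h (i + 1) i, Set.mem_iInter.2 fun j =>
    (hclosed j).mem_of_tendsto (f := h) (b := atTop) ?_ ?_⟩
  · exact tendsto_pi_nhds.2 fun i =>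
      tendsto_const_nhds.congr' ((eventually_gt_atTop i).mono fun k hk => (hlim i k hk).symm)
  · exact (eventually_ge_atTop j).mono fun k hk => hA hk (hh k)

end BaireSpace

structure Region where
  stem : ℕ → ℕ
  len : ℕ
  bound : ℕ

namespace Region

def carrier (r : Region) : Set (ℕ → ℕ) :=
  {f | ∀ i, (i < r.len → f i = r.stem i) ∧ (r.len ≤ i → r.bound ≤ f i)}

instance : Preorder Region := Preorder.lift carrier

theorem le_iff_carrier_subset {r r' : Region} : r ≤ r' ↔ r.carrier ⊆ r'.carrier := Iff.rfl

theorem isClosed_carrier (r : Region) : IsClosed r.carrier := by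
  rw [carrier, Set.ofPred_forall]
  exact isClosed_iInter fun i =>
    (isClosed_discrete {y | (i < r.len → y = r.stem i) ∧ (r.len ≤ i → r.bound ≤ y)}).preimage
      (continuous_apply (A := fun _ : ℕ => ℕ) i)

theorem carrier_nonempty (r : Region) : r.carrier.Nonempty :=
  ⟨fun i => if i < r.len then r.stem i else r.bound, fun i => by
    constructor <;> intro hi <;> simp [hi, not_lt.2]⟩

theorem eq_of_mem_carrier {r : Region} {f g : ℕ → ℕ} (hf : f ∈ r.carrier) (hg : g ∈ r.carrier)
    {i : ℕ} (hi : i < r.len) : f i = g i :=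
  ((hf i).1 hi).trans ((hg i).1 hi).symm

theorem exists_le_disjoint {K : Set (ℕ → ℕ)} (hK : IsClosed K) {r : Region}
    (h : ¬ r.carrier ⊆ K) :
    ∃ r' ≤ r, r'.bound = r.bound ∧ r.len ≤ r'.len ∧ Disjoint r'.carrier K := by
  obtain ⟨g, hg, hgK⟩ := Set.not_subset.1 h
  obtain ⟨n, hn⟩ := PiNat.exists_disjoint_cylinder hK hgK
  refine ⟨⟨g, max n r.len, r.bound⟩, fun f hf i => ?_, rfl, le_max_right _ _,
    hn.symm.mono_left fun f hf =>
      PiNat.mem_cylinder_iff.2 fun i hi => (hf i).1 (lt_max_of_lt_left hi)⟩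
  obtain ⟨hf₁, hf₂⟩ : (i < max n r.len → f i = g i) ∧ (max n r.len ≤ i → r.bound ≤ f i) := hf i
  refine ⟨fun hi => (hf₁ (by omega)).trans ((hg i).1 hi), fun hi => ?_⟩
  by_cases hin : i < max n r.len
  · exact (hf₁ hin) ▸ (hg i).2 hi
  · exact hf₂ (not_lt.1 hin)

theorem exists_le_forall_disjoint {ι : Type*} [Finite ι] {K : ι → Set (ℕ → ℕ)}
    (hK : ∀ i, IsClosed (K i)) {r : Region} (h : ∀ r' ≤ r, ∀ i, ¬ r'.carrier ⊆ K i) :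
    ∃ r' ≤ r, r'.bound = r.bound ∧ r.len ≤ r'.len ∧ ∀ i, Disjoint r'.carrier (K i) := by
  classical
  cases nonempty_fintype ι
  suffices ∀ s : Finset ι, ∃ r' ≤ r, r'.bound = r.bound ∧ r.len ≤ r'.len ∧
      ∀ i ∈ s, Disjoint r'.carrier (K i) by
    simpa using this Finset.univ
  intro s
  induction s using Finset.induction_on with
  | empty => exact ⟨r, le_rfl, rfl, le_rfl, by simp⟩
  | insert i s _ ih =>
    obtain ⟨r₁, hr₁, hb₁, hl₁, hd₁⟩ := ih
    obtain ⟨r₂, hr₂, hb₂, hl₂, hd₂⟩ := exists_le_disjoint (hK i) (h r₁ hr₁ i)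
    exact ⟨r₂, hr₂.trans hr₁, hb₂.trans hb₁, hl₁.trans hl₂,
      (Finset.forall_mem_insert _ _ _).2 ⟨hd₂, fun j hj => (hd₁ j hj).mono_left hr₂⟩⟩

def append (r : Region) (x : ℕ) : Region :=
  ⟨Function.update r.stem r.len x, r.len + 1, x⟩

theorem apply_len_of_mem_append {r : Region} {x : ℕ} {f : ℕ → ℕ}
    (hf : f ∈ (r.append x).carrier) : f r.len = x := by
  simpa [append] using (hf r.len).1 (Nat.lt_succ_self _)

theorem append_le {r : Region} {x : ℕ} (hx : r.bound ≤ x) : r.append x ≤ r := by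
  intro f hf i
  obtain ⟨hf₁, hf₂⟩ := hf i
  refine ⟨fun hi => ?_, fun hi => ?_⟩
  · simpa [append, hi.ne] using hf₁ (Nat.lt_succ_of_lt hi)
  · rcases hi.eq_or_lt with rfl | hi
    · rw [apply_len_of_mem_append hf]
      exact hx
    · exact hx.trans (hf₂ hi)

theorem exists_le_append_forall_disjoint {ι : Type*} [Finite ι] {K : ι → Set (ℕ → ℕ)}
    (hK : ∀ i, IsClosed (K i)) {r : Region} (h : ∀ r' ≤ r, ∀ i, ¬ r'.carrier ⊆ K i) {x : ℕ}
    (hx : r.bound ≤ x) :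
    ∃ r' ≤ r, r.len < r'.len ∧ r'.bound = x ∧ (∀ f ∈ r'.carrier, f (r'.len - 1) = x) ∧
      ∀ i, Disjoint r'.carrier (K i) := by
  obtain ⟨r₁, hr₁, hb₁, hl₁, hd₁⟩ := exists_le_forall_disjoint hK h
  have happ : r₁.append x ≤ r₁ := append_le (hb₁ ▸ hx)
  exact ⟨r₁.append x, happ.trans hr₁, Nat.lt_succ_of_le hl₁, rfl,
    fun f hf => apply_len_of_mem_append hf, fun i => (hd₁ i).mono_left happ⟩

open Filter in
theorem exists_mem_forall_not_mem {ι : Type*} [Finite ι] {K : ι → ℕ → Set (ℕ → ℕ)}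
    (hK : ∀ i m, IsClosed (K i m)) {r₀ : Region} (h : ∀ r ≤ r₀, ∀ i m, ¬ r.carrier ⊆ K i m)
    {b : ℕ → ℕ} (hb : Monotone b) (hb₀ : r₀.bound ≤ b 0) :
    ∃ f ∈ r₀.carrier, (∀ i m, f ∉ K i m) ∧
      ∀ j, (∃ k ≥ j, f k = b j) ∧ ∀ᶠ k in atTop, b j ≤ f k := by
  have step : ∀ j (r : Region), ∃ r' : Region, r ≤ r₀ → r.bound ≤ b j →
      r' ≤ r ∧ r.len < r'.len ∧ r'.bound = b j ∧ (∀ f ∈ r'.carrier, f (r'.len - 1) = b j) ∧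
        ∀ i, Disjoint r'.carrier (K i j) := by
    intro j r
    by_cases hr : r ≤ r₀ ∧ r.bound ≤ b j
    · obtain ⟨r', h'⟩ := exists_le_append_forall_disjoint (hK · j)
        (fun r' hr' i => h r' (hr'.trans hr.1) i j) hr.2
      exact ⟨r', fun _ _ => h'⟩
    · exact ⟨r, fun h₁ h₂ => absurd ⟨h₁, h₂⟩ hr⟩
  choose st hst using step
  let c : ℕ → Region := fun j => Nat.rec r₀ st j
  have hc : ∀ j, c j ≤ r₀ → (c j).bound ≤ b j →
      c (j + 1) ≤ c j ∧ (c j).len < (c (j + 1)).len ∧ (c (j + 1)).bound = b j ∧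
        (∀ f ∈ (c (j + 1)).carrier, f ((c (j + 1)).len - 1) = b j) ∧
          ∀ i, Disjoint (c (j + 1)).carrier (K i j) := fun j => hst j (c j)
  have hinv : ∀ j, c j ≤ r₀ ∧ (c j).bound ≤ b j ∧ j ≤ (c j).len := by
    intro j
    induction j with
    | zero => exact ⟨le_rfl, hb₀, Nat.zero_le _⟩
    | succ j ih =>
      obtain ⟨hle, hlt, hbd, -⟩ := hc j ih.1 ih.2.1
      exact ⟨hle.trans ih.1, hbd ▸ hb (Nat.le_succ j), by omega⟩
  replace hc := fun j => hc j (hinv j).1 (hinv j).2.1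
  obtain ⟨f, hf⟩ := nonempty_iInter_of_antitone (A := fun j => (c j).carrier)
    (antitone_nat_of_succ_le fun j => (hc j).1) (fun j => (c j).isClosed_carrier)
    (fun j => (c j).carrier_nonempty)
    fun j f hf g hg i hi => eq_of_mem_carrier hf hg (hi.trans_le (hinv j).2.2)
  rw [Set.mem_iInter] at hf
  refine ⟨f, hf 0, fun i m hm => Set.disjoint_left.1 ((hc m).2.2.2.2 i) (hf (m + 1)) hm,
    fun j => ⟨⟨(c (j + 1)).len - 1, ?_, (hc j).2.2.2.1 f (hf (j + 1))⟩, ?_⟩⟩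
  · have := (hinv j).2.2
    have := (hc j).2.1
    omega
  · exact eventually_atTop.2 ⟨(c (j + 1)).len, fun k hk => (hc j).2.2.1 ▸ (hf (j + 1) k).2 hk⟩

end Region

def recurrentSeqs : Set (ℕ → ℕ) := {f | ∃ v, {i | f i = v}.Infinite}

theorem exists_not_mem_recurrentSeqs_forall_mem_iff {C : Type} [Finite C]
    {S : C → Set (ℕ → ℕ)} (hS : ∀ c, IsSigma2 (S c)) :
    ∃ f ∉ recurrentSeqs, ∃ f' ∈ recurrentSeqs, ∀ c, f ∈ S c ↔ f' ∈ S c := by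
  choose K hK hSK using hS
  obtain ⟨r₀, -, hr₀⟩ := exists_le_forall_or_forall_le_not
    (fun c (r : Region) => ∃ m, r.carrier ⊆ K c m)
    (fun _ _ _ hle ⟨m, hm⟩ => ⟨m, (Region.le_iff_carrier_subset.1 hle).trans hm⟩) ⟨0, 0, 0⟩
  let U := {c // ∀ r ≤ r₀, ¬ ∃ m, r.carrier ⊆ K c m}
  have hU : ∀ r ≤ r₀, ∀ (c : U) m, ¬ r.carrier ⊆ K c m := fun r hr c m hm => c.2 r hr ⟨m, hm⟩
  obtain ⟨f, hf₀, hfK, hf⟩ := Region.exists_mem_forall_not_mem (fun (c : U) m => hK c m) hU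
    (b := fun j => r₀.bound + j) (fun _ _ h => by dsimp only; omega) le_self_add
  obtain ⟨f', hf'₀, hf'K, hf'⟩ :=
    Region.exists_mem_forall_not_mem (fun (c : U) m => hK c m) hU monotone_const le_rfl
  refine ⟨f, ?_, f', ⟨r₀.bound, ?_⟩, fun c => ?_⟩
  · rintro ⟨v, hv⟩
    obtain ⟨N, hN⟩ := Filter.eventually_atTop.1 (hf (v + 1)).2
    refine hv ((Set.finite_lt_nat N).subset fun i hi => show i < N from not_le.1 fun hiN => ?_)
    have := hN i hiN
    simp only [Set.mem_ofPred] at hi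
    omega
  · exact Nat.frequently_atTop_iff_infinite.1
      (Filter.frequently_atTop.2 fun j => (hf' j).1)
  · rw [hSK c, Set.mem_iUnion, Set.mem_iUnion]
    rcases hr₀ c with ⟨m, hm⟩ | hc
    · exact iff_of_true ⟨m, hm hf₀⟩ ⟨m, hm hf'₀⟩
    · exact iff_of_false (fun ⟨m, hm⟩ => hfK ⟨c, hc⟩ m hm) fun ⟨m, hm⟩ => hf'K ⟨c, hc⟩ m hm

theorem recurrentSeqs_ne_setOf_eval {C : Type} [Finite C] {S : C → Set (ℕ → ℕ)}
    (hS : ∀ c, IsSigma2 (S c)) (φ : BC C) : recurrentSeqs ≠ {f | φ.eval fun c => f ∈ S c} := by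
  obtain ⟨f, hf, f', hf', hff'⟩ := exists_not_mem_recurrentSeqs_forall_mem_iff hS
  intro h
  rw [h] at hf hf'
  exact hf ((BC.eval_congr hff' φ).2 hf')

theorem bpos_zero (ns : ℕ → ℕ) : bpos ns 0 = ns 0 := by
  simp [bpos]

theorem bpos_succ (ns : ℕ → ℕ) (k : ℕ) : bpos ns (k + 1) = bpos ns k + 1 + ns (k + 1) := by
  simp only [bpos, Finset.sum_range_succ]
  ring

theorem bpos_strictMono (ns : ℕ → ℕ) : StrictMono (bpos ns) :=
  strictMono_nat_of_lt_succ fun k => by rw [bpos_succ]; omega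

theorem bpos_congr {ns ns' : ℕ → ℕ} {k : ℕ} (h : ∀ i ≤ k, ns i = ns' i) :
    bpos ns k = bpos ns' k := by
  unfold bpos
  rw [Finset.sum_congr rfl fun i hi => h i (Nat.lt_succ_iff.1 (Finset.mem_range.1 hi))]

theorem exists_bpos_eq {p : ℕ → ℕ} (hp : StrictMono p) : ∃ ns, bpos ns = p := by
  refine ⟨fun k => if k = 0 then p 0 else p k - p (k - 1) - 1, funext fun k => ?_⟩
  induction k with
  | zero => simp [bpos_zero]
  | succ k ih =>
    have := hp (Nat.lt_add_one k)
    rw [bpos_succ, ih]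
    simp only [Nat.add_one_ne_zero, if_false, Nat.add_sub_cancel]
    omega

def blockLen (w : ℕ → Bool) : ℕ → ℕ
  | 0 => 0
  | n + 1 => if w n then 0 else blockLen w n + 1

theorem blockLen_add {w : ℕ → Bool} {m j : ℕ} (h : ∀ i, m ≤ i → i < m + j → w i = false) :
    blockLen w (m + j) = blockLen w m + j := by
  induction j with
  | zero => rfl
  | succ j ih =>
    rw [← Nat.add_assoc, blockLen, h (m + j) (Nat.le_add_right m j) (by omega), if_neg (by simp),
      ih fun i hi hij => h i hi (by omega), Nat.add_assoc]

theorem blockLen_bpos {w : ℕ → Bool} {ns : ℕ → ℕ} (hw : ∀ m, w m = true ↔ ∃ k, bpos ns k = m)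
    (k : ℕ) : blockLen w (bpos ns k) = ns k := by
  have hfalse : ∀ i, (∀ k, bpos ns k ≠ i) → w i = false := fun i hi =>
    Bool.eq_false_iff.2 fun hwi => let ⟨k, hk⟩ := (hw i).1 hwi; hi k hk
  have hmono := (bpos_strictMono ns).monotone
  cases k with
  | zero =>
    rw [bpos_zero, ← Nat.zero_add (ns 0), blockLen_add fun i _ hi => hfalse i fun k hk => ?_]
    · rfl
    · have := hmono (Nat.zero_le k)
      rw [bpos_zero] at this
      omega
  | succ k =>
    have hbk : w (bpos ns k) = true := (hw _).2 ⟨k, rfl⟩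
    rw [bpos_succ, blockLen_add fun i hi hi' => hfalse i fun k' hk' => ?_]
    · simp [blockLen, hbk]
    · rcases le_or_gt k' k with hk | hk
      · have := hmono hk
        omega
      · have := hmono (Nat.succ_le_of_lt hk)
        rw [bpos_succ] at this
        omega

open Classical in
noncomputable def wordOf (ns : ℕ → ℕ) : ℕ → Bool :=
  fun m => decide (∃ k, bpos ns k = m)

theorem wordOf_eq_true {ns : ℕ → ℕ} {m : ℕ} : wordOf ns m = true ↔ ∃ k, bpos ns k = m := by
  simp [wordOf]

theorem wordOf_congr {ns ns' : ℕ → ℕ} {m : ℕ} (h : ∀ i < m + 1, ns i = ns' i) :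
    wordOf ns m = wordOf ns' m := by
  have key : ∀ {ns ns' : ℕ → ℕ}, (∀ i < m + 1, ns i = ns' i) →
      (∃ k, bpos ns k = m) → ∃ k, bpos ns' k = m := by
    rintro ns ns' h ⟨k, rfl⟩
    refine ⟨k, (bpos_congr fun i hi => h i ?_).symm⟩
    have := (bpos_strictMono ns).le_apply (x := k)
    omega
  rw [Bool.eq_iff_iff, wordOf_eq_true, wordOf_eq_true]
  exact ⟨key h, key fun i hi => (h i hi).symm⟩

theorem setOf_blockLen_eq_image {w : ℕ → Bool} {ns : ℕ → ℕ}
    (hw : ∀ m, w m = true ↔ ∃ k, bpos ns k = m) (v : ℕ) :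
    {m | w m = true ∧ blockLen w m = v} = bpos ns '' {k | ns k = v} := by
  ext m
  constructor
  · rintro ⟨hm, rfl⟩
    obtain ⟨k, rfl⟩ := (hw m).1 hm
    exact ⟨k, (blockLen_bpos hw k).symm, rfl⟩
  · rintro ⟨k, hk, rfl⟩
    exact ⟨(hw _).2 ⟨k, rfl⟩, (blockLen_bpos hw k).trans hk⟩

theorem infinite_setOf_blockLen_iff {w : ℕ → Bool} {ns : ℕ → ℕ}
    (hw : ∀ m, w m = true ↔ ∃ k, bpos ns k = m) (v : ℕ) :
    {m | w m = true ∧ blockLen w m = v}.Infinite ↔ {k | ns k = v}.Infinite := by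
  rw [setOf_blockLen_eq_image hw, Set.infinite_image_iff (bpos_strictMono ns).injective.injOn]

theorem mem_Lsep_iff {w : ℕ → Bool} :
    w ∈ Lsep ↔ ∃ v, {m | w m = true ∧ blockLen w m = v}.Infinite := by
  constructor
  · rintro ⟨ns, hw, v, hv⟩
    exact ⟨v, (infinite_setOf_blockLen_iff hw v).2 hv⟩
  · rintro ⟨v, hv⟩
    have hinf : {m | w m = true}.Infinite := hv.mono fun m hm => hm.1
    obtain ⟨ns, hns⟩ := exists_bpos_eq (Nat.nth_strictMono hinf)
    have hw : ∀ m, w m = true ↔ ∃ k, bpos ns k = m := fun m => by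
      rw [hns, ← Set.mem_range, Nat.range_nth_of_infinite hinf]
      rfl
    exact ⟨ns, hw, v, (infinite_setOf_blockLen_iff hw v).1 hv⟩

theorem wordOf_mem_Lsep_iff {ns : ℕ → ℕ} : wordOf ns ∈ Lsep ↔ ns ∈ recurrentSeqs :=
  mem_Lsep_iff.trans (exists_congr (infinite_setOf_blockLen_iff fun _ => wordOf_eq_true))

namespace MaxAutomaton

variable {α : Type} (A : MaxAutomaton α)

theorem runFrom_valsFrom_congr (q : A.Q) {w w' : ℕ → α} {n : ℕ} (h : ∀ i < n, w i = w' i) :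
    A.runFrom q w n = A.runFrom q w' n ∧ A.valsFrom q w n = A.valsFrom q w' n := by
  induction n with
  | zero => exact ⟨rfl, rfl⟩
  | succ n ih =>
    obtain ⟨hrun, hvals⟩ := ih fun i hi => h i (Nat.lt_succ_of_lt hi)
    simp only [runFrom, valsFrom, hrun, hvals, h n (Nat.lt_succ_self n), and_self]

theorem outsFrom_congr (q : A.Q) {w w' : ℕ → α} {n : ℕ} (h : ∀ i < n + 1, w i = w' i) :
    A.outsFrom q w n = A.outsFrom q w' n := by
  obtain ⟨hrun, hvals⟩ := A.runFrom_valsFrom_congr q fun i hi => h i (Nat.lt_succ_of_lt hi)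
  simp only [outsFrom, hrun, hvals, h n (Nat.lt_succ_self n)]

theorem isSigma2_setOf_boundedFrom_wordOf (A : MaxAutomaton Bool) (c : A.C) :
    IsSigma2 {ns | A.BoundedFrom A.init (wordOf ns) c} := by
  refine ⟨fun B => {ns | ∀ n, ∀ p ∈ A.outsFrom A.init (wordOf ns) n, p.1 = c → p.2 ≤ B},
    fun B => ?_, by ext; simp [BoundedFrom]⟩
  beta_reduce
  rw [Set.ofPred_forall]
  refine isClosed_iInter fun n => isClosed_setOf_of_agree (n + 1) fun ns ns' h hp => ?_
  rwa [← A.outsFrom_congr _ fun i hi => wordOf_congr fun j hj => h j (by omega)]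

end MaxAutomaton

theorem not_exists_maxAutomaton_lang_eq_Lsep : ¬ ∃ A : MaxAutomaton Bool, A.Lang = Lsep := by
  rintro ⟨A, hA⟩
  refine recurrentSeqs_ne_setOf_eval A.isSigma2_setOf_boundedFrom_wordOf A.acc ?_
  ext ns
  rw [← wordOf_mem_Lsep_iff, ← hA]
  rfl

theorem exists_forall_count_lt_iff_finite {p : ℕ → Prop} [DecidablePred p] :
    (∃ B, ∀ n, p n → Nat.count p n < B) ↔ {n | p n}.Finite := by
  refine ⟨fun ⟨B, hB⟩ => Set.not_infinite.1 fun hinf => ?_, fun h => ?_⟩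
  · have := hB _ (Nat.nth_mem_of_infinite hinf B)
    rw [Nat.count_nth_of_infinite hinf] at this
    exact lt_irrefl B this
  · obtain ⟨N, hN⟩ := h.bddAbove
    exact ⟨N + 1, fun n hn => Nat.lt_succ_of_le ((Nat.count_le _).trans (hN hn))⟩

def lsepOps : Bool → Bool → List (CounterOp Bool)
  | false, _ => [.inc false]
  | true, false => [.reset false]
  | true, true => [.output false, .inc true, .output true, .reset false]

/-- Counter `false` measures the current block of `a`s. At each `b` the automaton guesses whether
to select the block: a selected block outputs its length, and increments and outputs counter
`true`. So the outputs of `false` are bounded and those of `true` are unbounded iff infinitely many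
blocks of bounded length are selected. -/
def lsepAutomaton : NMaxAutomaton Bool where
  Q := Unit
  C := Bool
  init := ()
  δ := fun _ a => Set.range fun sel => ((), lsepOps a sel)
  acc := .an (.atom false) (.nt (.atom true))

section lsepRun

variable (w sel : ℕ → Bool)

theorem nvals_lsepOps (n : ℕ) :
    nvals (fun i => lsepOps (w i) (sel i)) n =
      fun c => cond c (Nat.count (fun i => (w i && sel i) = true) n) (blockLen w n) := by
  induction n with
  | zero => funext c; cases c <;> rfl
  | succ n ih =>
    rw [nvals, ih]
    funext c
    cases hw : w n <;> cases hs : sel n <;> cases c <;>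
      simp [lsepOps, applyOps, applyOp, blockLen, Nat.count_succ, *]

theorem nouts_lsepOps (n : ℕ) :
    nouts (fun i => lsepOps (w i) (sel i)) n =
      if (w n && sel n) = true then
        [(false, blockLen w n), (true, Nat.count (fun i => (w i && sel i) = true) n + 1)]
      else [] := by
  rw [nouts, nvals_lsepOps]
  cases w n <;> cases sel n <;> simp [lsepOps, applyOps, applyOp]

end lsepRun

theorem lsepAutomaton_accepts_iff {w : ℕ → Bool} : lsepAutomaton.Accepts w ↔
    ∃ sel : ℕ → Bool, (∃ B, ∀ n, (w n && sel n) = true → blockLen w n ≤ B) ∧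
      {n | (w n && sel n) = true}.Infinite := by
  have hrun : lsepAutomaton.Accepts w ↔ ∃ sel : ℕ → Bool, lsepAutomaton.acc.eval fun c =>
      ∃ B, ∀ n, ∀ p ∈ nouts (fun i => lsepOps (w i) (sel i)) n, p.1 = c → p.2 ≤ B := by
    constructor
    · rintro ⟨q, ops, -, hops, hacc⟩
      choose sel hsel using hops
      obtain rfl : ops = fun n => lsepOps (w n) (sel n) :=
        funext fun n => (congrArg Prod.snd (hsel n)).symm
      exact ⟨sel, hacc⟩
    · rintro ⟨sel, hacc⟩
      exact ⟨fun _ => (), _, rfl, fun n => ⟨sel n, rfl⟩, hacc⟩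
  rw [hrun]
  refine exists_congr fun sel =>
    and_congr ?_ (not_congr ((?_ : _ ↔ _).trans exists_forall_count_lt_iff_finite))
  all_goals
    simp only [BC.eval, nouts_lsepOps]
    refine exists_congr fun B => forall_congr' fun n => ?_
    split_ifs with h <;> simp [h]

theorem lsepAutomaton_lang : lsepAutomaton.Lang = Lsep := by
  ext w
  rw [NMaxAutomaton.Lang, Set.mem_ofPred, lsepAutomaton_accepts_iff, mem_Lsep_iff]
  constructor
  · rintro ⟨sel, ⟨B, hB⟩, hinf⟩
    by_contra! hfin
    refine hinf (((Set.finite_Iic B).biUnion fun v _ => hfin v).subset fun n hn => ?_)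
    simp only [Bool.and_eq_true, Set.mem_ofPred] at hn
    exact Set.mem_biUnion (hB n (by simp [hn])) ⟨hn.1, rfl⟩
  · rintro ⟨v, hv⟩
    refine ⟨fun n => decide (blockLen w n = v), ⟨v, fun n hn => by simp_all⟩, ?_⟩
    simpa using hv

/-- The language `L_sep` is recognized by a nondeterministic
max-automaton but by no deterministic max-automaton; hence nondeterministic
max-automata are strictly more expressive than deterministic ones. -/
theorem nondeterministic_strictly_stronger :
    (∃ N : NMaxAutomaton Bool, N.Lang = Lsep) ∧
    ¬ ∃ A : MaxAutomaton Bool, A.Lang = Lsep :=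
  ⟨⟨lsepAutomaton, lsepAutomaton_lang⟩, not_exists_maxAutomaton_lang_eq_Lsep⟩

end MaxReg
end

section
/- Every language over a finite alphabet Σ recognized by a deterministic max-automaton is a boolean combination of Σ₂ subsets of Σ^ω. -/
namespace MaxReg

/-! The acceptance condition is a boolean combination of the predicates "`ρ_c` is bounded".
Each of them defines the union over `B` of the intersection over `n` of the sets of words whose
outputs on `c` at step `n` are at most `B`; such a set is clopen, because the outputs at step `n`
only depend on the first `n + 1` letters. -/

theorem IsSigma2.of_isClosed {X : Type} [TopologicalSpace X] {S : Set X} (hS : IsClosed S) :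
    IsSigma2 S :=
  ⟨fun _ => S, fun _ => hS, Set.iUnion_const S |>.symm⟩

theorem IsBoolCombSigma2.setOf_eval {σ X : Type} [TopologicalSpace X] (φ : BC σ)
    {S : σ → Set X} (hS : ∀ a, IsBoolCombSigma2 (S a)) :
    IsBoolCombSigma2 { x | φ.eval (fun a => x ∈ S a) } := by
  induction φ with
  | tt => simpa only [BC.eval, Set.ofPred_true] using .base (.of_isClosed isClosed_univ)
  | atom a => exact hS a
  | nt φ ih => exact ih.compl
  | an φ ψ ihφ ihψ => exact ihφ.inter ihψ

namespace MaxAutomaton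

variable {α : Type} (A : MaxAutomaton α)

theorem runFrom_valsFrom_eq_of_mem_cylinder (q : A.Q) {w w' : ℕ → α} {n : ℕ}
    (h : w' ∈ PiNat.cylinder w n) :
    A.runFrom q w' n = A.runFrom q w n ∧ A.valsFrom q w' n = A.valsFrom q w n := by
  induction n with
  | zero => exact ⟨rfl, rfl⟩
  | succ n ih =>
    obtain ⟨hrun, hvals⟩ := ih (PiNat.cylinder_anti w n.le_succ h)
    have hletter : w' n = w n := h n n.lt_succ_self
    simp only [runFrom, valsFrom, hrun, hvals, hletter, and_self]

theorem outsFrom_eq_of_mem_cylinder (q : A.Q) {w w' : ℕ → α} {n : ℕ}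
    (h : w' ∈ PiNat.cylinder w (n + 1)) : A.outsFrom q w' n = A.outsFrom q w n := by
  obtain ⟨hrun, hvals⟩ :=
    A.runFrom_valsFrom_eq_of_mem_cylinder q (PiNat.cylinder_anti w n.le_succ h)
  simp only [outsFrom, hrun, hvals, h n n.lt_succ_self]

variable [TopologicalSpace α] [DiscreteTopology α]

theorem isLocallyConstant_outsFrom (q : A.Q) (n : ℕ) :
    IsLocallyConstant fun w => A.outsFrom q w n :=
  (IsLocallyConstant.iff_exists_open _).2 fun w =>
    ⟨PiNat.cylinder w (n + 1), PiNat.isOpen_cylinder _ w _, PiNat.self_mem_cylinder w _,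
      fun _ => A.outsFrom_eq_of_mem_cylinder q⟩

theorem isSigma2_setOf_boundedFrom (q : A.Q) (c : A.C) :
    IsSigma2 { w | A.BoundedFrom q w c } := by
  let capped (B : ℕ) : Set (List (A.C × ℕ)) := { l | ∀ p ∈ l, p.1 = c → p.2 ≤ B }
  refine ⟨fun B => ⋂ n, (fun w => A.outsFrom q w n) ⁻¹' capped B,
    fun B => isClosed_iInter fun n =>
      isOpen_compl_iff.1 (A.isLocallyConstant_outsFrom q n (capped B)ᶜ), ?_⟩
  ext w
  simp only [BoundedFrom, capped, Set.mem_ofPred_eq, Set.mem_iUnion, Set.mem_iInter,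
    Set.mem_preimage]

end MaxAutomaton

theorem maxAutomaton_boolCombSigma2_general {α : Type}
    [TopologicalSpace α] [DiscreteTopology α] (A : MaxAutomaton α) :
    IsBoolCombSigma2 A.Lang :=
  .setOf_eval A.acc fun c => .base (A.isSigma2_setOf_boundedFrom A.init c)

/-- Every language recognized by a deterministic max-automaton
over a finite alphabet is a boolean combination of `Σ₂` subsets of `α^ω`. -/
theorem maxAutomaton_boolCombSigma2 {α : Type} [Fintype α]
    [TopologicalSpace α] [DiscreteTopology α] (A : MaxAutomaton α) :
    IsBoolCombSigma2 A.Lang :=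
  maxAutomaton_boolCombSigma2_general A

end MaxReg
end
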